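/- arXiv:2105.06376 — 4 statements merged into one kernel-verified Lean document; each statement's English description precedes it below -/
import Mathlib

section
/- Let r₁, r₂ ∈ ℕ, let A be an r₁×r₁ complex unitary matrix and B an r₂×r₂ complex unitary matrix. If Tr(Aⁿ) = Tr(Bⁿ) for every integer n ≥ 1, then r₁ = r₂. -/
/-!
The pair `(A, B)` lives in the compact group `U(r₁) × U(r₂)`, where the identity is a cluster
point of the positive powers of any element. The continuous function `(a, b) ↦ Tr a - Tr b`
vanishes on all positive powers of `(A, B)`, hence also at the identity, where it equals `r₁ - r₂`.
-/

open Filter Topology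

theorem apply_one_eq_of_forall_apply_pow_eq {G X : Type*} [Group G] [TopologicalSpace G]
    [IsTopologicalGroup G] [CompactSpace G] [TopologicalSpace X] [T2Space X] {f : G → X}
    (hf : Continuous f) {g : G} {c : X} (h : ∀ n, 1 ≤ n → f (g ^ n) = c) : f 1 = c := by
  by_contra hne
  have hcluster : MapClusterPt (f 1) atTop (fun n : ℕ => f (g ^ n)) :=
    (mapClusterPt_one_atTop_pow g).continuousAt_comp hf.continuousAt
  obtain ⟨n, hne_n, hn⟩ :=
    ((hcluster.frequently (eventually_ne_nhds hne)).and_eventually (eventually_ge_atTop 1)).exists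
  exact hne_n (h n hn)

namespace Matrix

variable {n 𝕜 : Type*} [Fintype n] [DecidableEq n] [RCLike 𝕜]

theorem isCompact_unitaryGroup : IsCompact (unitaryGroup n 𝕜 : Set (Matrix n n 𝕜)) := by
  refine (isCompact_univ_pi fun _ => isCompact_univ_pi fun _ =>
    isCompact_closedBall (0 : 𝕜) 1).of_isClosed_subset
    (isClosed_unitary (R := Matrix n n 𝕜)) fun U hU i _ j _ => ?_
  simpa using entry_norm_bound_of_unitary hU i j

instance : CompactSpace (unitaryGroup n 𝕜) :=
  isCompact_iff_compactSpace.1 isCompact_unitaryGroup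

end Matrix

/-- If two complex unitary matrices (of possibly different sizes `r₁`, `r₂`) have equal traces
of all their positive powers, then `r₁ = r₂`. -/
theorem rank_eq_of_trace_pow_eq (r₁ r₂ : ℕ)
    (A : Matrix.unitaryGroup (Fin r₁) ℂ) (B : Matrix.unitaryGroup (Fin r₂) ℂ)
    (h : ∀ n : ℕ, 1 ≤ n →
      Matrix.trace ((A : Matrix (Fin r₁) (Fin r₁) ℂ) ^ n) =
        Matrix.trace ((B : Matrix (Fin r₂) (Fin r₂) ℂ) ^ n)) :
    r₁ = r₂ := by
  let traceDiff (p : Matrix.unitaryGroup (Fin r₁) ℂ × Matrix.unitaryGroup (Fin r₂) ℂ) : ℂ :=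
    Matrix.trace (p.1 : Matrix (Fin r₁) (Fin r₁) ℂ) -
      Matrix.trace (p.2 : Matrix (Fin r₂) (Fin r₂) ℂ)
  have hcont : Continuous traceDiff := by fun_prop
  have hpow : ∀ n, 1 ≤ n → traceDiff ((A, B) ^ n) = 0 := fun n hn => by
    simpa [traceDiff, sub_eq_zero] using h n hn
  have hone : traceDiff 1 = (r₁ : ℂ) - r₂ := by simp [traceDiff]
  exact_mod_cast sub_eq_zero.1 (hone ▸ apply_one_eq_of_forall_apply_pow_eq hcont hpow)
end

section
/- Let G be a monoid and let ρ₁, ρ₂ : G → U(r) be monoid homomorphisms into the group U(r) of r×r complex unitary matrices such that Tr ρ₁(g) = Tr ρ₂(g) for every g ∈ G. Then the two representations are unitarily equivalent: there exists a unitary matrix p ∈ U(r) such that ρ₁(g) = p · ρ₂(g) · p⁻¹ for all g ∈ G. -/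
/-!
The pairs `(ρ₁ g, ρ₂ g)` span a ∗-subalgebra of `Mᵣ(ℂ) × Mᵣ(ℂ)` (inverses of unitaries lie in
every finite-dimensional subalgebra containing them), and the two coordinate projections are
∗-representations of it with equal traces. For two such representations `π₁, π₂` the trace form
`(x, y) ↦ tr (x₁ y₁)` on their joint image is symmetric, invariant and nondegenerate, so summing
`x₁ X y₂` over a basis `x` and its dual basis `y` gives an intertwiner `π₁ a T = T π₂ a`; its total
trace over the matrix units `X` is `tr (π₁ 1)`, so it is nonzero for some `X`. A spectral projection
`q` of `T* T` for an eigenvalue `c > 0` makes `T q / √c` a partial isometry between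
subrepresentations. The complementary subrepresentations again have equal traces and smaller rank,
so by induction the partial isometries add up to a unitary intertwiner.
-/

open Matrix

namespace LinearMap.BilinForm

variable {K B W ι : Type*} [Field K] [AddCommGroup B] [Module K B] [AddCommGroup W] [Module K W]
  [Fintype ι] [DecidableEq ι] {β : LinearMap.BilinForm K B}

theorem basis_repr_eq_apply_dualBasis (hβ : β.Nondegenerate) (hsymm : β.IsSymm)
    (b : Module.Basis ι K B) (y : B) (i : ι) : b.repr y i = β y (β.dualBasis hβ b i) := by
  conv_lhs => rw [← dualBasis_dualBasis hβ hsymm b]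
  exact dualBasis_repr_apply hβ _ y i

theorem sum_apply_dualBasis_mul_apply_basis (hβ : β.Nondegenerate) (hsymm : β.IsSymm)
    (b : Module.Basis ι K B) (x y : B) :
    ∑ i, β x (β.dualBasis hβ b i) * β (b i) y = β x y := by
  conv_rhs => rw [← b.sum_repr x]
  simp [basis_repr_eq_apply_dualBasis hβ hsymm]

/-- The Casimir element `∑ bᵢ ⊗ bⁱ` of a symmetric invariant form commutes with `B`. -/
theorem sum_mul_basis_dualBasis [Mul B] (hβ : β.Nondegenerate) (hsymm : β.IsSymm)
    (hassoc : ∀ x y z, β (x * y) z = β x (y * z)) (b : Module.Basis ι K B)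
    (Φ : B →ₗ[K] B →ₗ[K] W) (c : B) :
    ∑ i, Φ (c * b i) (β.dualBasis hβ b i) = ∑ i, Φ (b i) (β.dualBasis hβ b i * c) := by
  set d := β.dualBasis hβ b
  have hl : ∀ i, c * b i = ∑ j, β (c * b i) (d j) • b j := fun i => by
    conv_lhs => rw [← b.sum_repr (c * b i)]
    simp only [basis_repr_eq_apply_dualBasis hβ hsymm, d]
  have hr : ∀ i, d i * c = ∑ j, β (c * b j) (d i) • d j := fun i => by
    conv_lhs => rw [← d.sum_repr (d i * c)]
    simp only [dualBasis_repr_apply, hassoc, hsymm.eq (d i), d]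
  calc ∑ i, Φ (c * b i) (d i) = ∑ i, ∑ j, β (c * b i) (d j) • Φ (b j) (d i) :=
        Finset.sum_congr rfl fun i _ => by
          conv_lhs => rw [hl i]
          simp
    _ = ∑ i, ∑ j, β (c * b j) (d i) • Φ (b i) (d j) := Finset.sum_comm
    _ = ∑ i, Φ (b i) (d i * c) := Finset.sum_congr rfl fun i _ => by rw [hr i]; simp

end LinearMap.BilinForm

theorem exists_isStarProjection_mul_eq_smul {A : Type*} [Ring A] [StarRing A] [Algebra ℝ A]
    [TopologicalSpace A] [ContinuousFunctionalCalculus ℝ A IsSelfAdjoint] [IsTopologicalRing A]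
    [T2Space A] [PartialOrder A] [StarOrderedRing A] [NonnegSpectrumClass ℝ A]
    {s : A} (hs : 0 ≤ s) (hs0 : s ≠ 0) (hfin : (spectrum ℝ s).Finite) :
    ∃ c : ℝ, 0 < c ∧ ∃ q : A, IsStarProjection q ∧ q ≠ 0 ∧ s * q = c • q ∧
      ∀ x, Commute s x → Commute q x := by
  obtain ⟨c, hc, hc0⟩ : ∃ c ∈ spectrum ℝ s, c ≠ 0 := by
    by_contra! h
    exact hs0 (CFC.eq_zero_of_spectrum_subset_zero (R := ℝ) s h)
  let f : ℝ → ℝ := fun x => if x = c then 1 else 0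
  have hf : ContinuousOn f (spectrum ℝ s) := hfin.continuousOn f
  refine ⟨c, lt_of_le_of_ne (spectrum_nonneg_of_nonneg hs hc) hc0.symm, cfc f s,
    ⟨?_, cfc_predicate f s⟩, fun h => ?_, ?_, fun x hx => hx.cfc_real f⟩
  · rw [IsIdempotentElem, ← cfc_mul f f s]
    congr! 2 with x
    by_cases hx : x = c <;> simp [f, hx]
  · have hf0 := eqOn_of_cfc_eq_cfc (h.trans (cfc_zero ℝ s).symm)
    simpa [f] using hf0 hc
  · calc s * cfc f s = cfc (fun x => x * f x) s := by
          rw [cfc_mul (fun x => x) f s, cfc_id' ℝ s]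
      _ = cfc (fun x => c * f x) s := by
          congr! 2 with x
          by_cases hx : x = c <;> simp [f, hx]
      _ = c • cfc f s := cfc_const_mul c f s

namespace Matrix

variable {m n R K : Type*} [Fintype m] [Fintype n]

theorem mul_conjTranspose_mul_self_of_isIdempotentElem [DecidableEq n] [Ring R] [StarRing R]
    [PartialOrder R] [StarOrderedRing R] [NoZeroDivisors R] {v : Matrix m n R}
    (hv : IsIdempotentElem (vᴴ * v)) : v * vᴴ * v = v := by
  have h : (1 - vᴴ * v) * vᴴ = 0 := by
    rw [← mul_conjTranspose_mul_self_eq_zero, sub_mul, one_mul, hv.eq, sub_self]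
  have h' := congrArg conjTranspose h
  rw [conjTranspose_mul, conjTranspose_sub, conjTranspose_one, conjTranspose_mul,
    conjTranspose_conjTranspose, conjTranspose_zero, Matrix.mul_sub, Matrix.mul_one,
    sub_eq_zero] at h'
  rw [Matrix.mul_assoc, ← h']

theorem eq_zero_of_isStarProjection_of_trace_eq_zero [Ring R] [StarRing R] [PartialOrder R]
    [StarOrderedRing R] [NoZeroDivisors R] {p : Matrix n n R} (hp : IsStarProjection p)
    (h : p.trace = 0) : p = 0 := by
  have hpp : pᴴ * p = p := by
    rw [← star_eq_conjTranspose, hp.isSelfAdjoint.star_eq, hp.isIdempotentElem.eq]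
  rwa [← hpp, trace_conjTranspose_mul_self_eq_zero_iff] at h

theorem trace_eq_rank_of_isIdempotentElem [DecidableEq n] [Field K] {e : Matrix n n K}
    (he : IsIdempotentElem e) : e.trace = e.rank := by
  have : IsIdempotentElem (toLin' e) := by
    rw [IsIdempotentElem, Module.End.mul_eq_comp, ← toLin'_mul, he.eq]
  rw [← trace_toLin'_eq, (LinearMap.IsIdempotentElem.isProj_range _ this).trace, rank,
    toLin'_apply']

theorem rank_sub_lt_of_isStarProjection [DecidableEq n] [Field K] [StarRing K] [PartialOrder K]
    [StarOrderedRing K] [CharZero K] {p r : Matrix n n K} (hp : IsStarProjection p)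
    (hr : IsStarProjection r) (hpr : p * r = r) (hr0 : r ≠ 0) : (p - r).rank < p.rank := by
  have hrank : ((p - r).rank : K) + r.rank = p.rank := by
    rw [← trace_eq_rank_of_isIdempotentElem (hr.sub_of_mul_eq_right hp hpr).isIdempotentElem,
      ← trace_eq_rank_of_isIdempotentElem hr.isIdempotentElem,
      ← trace_eq_rank_of_isIdempotentElem hp.isIdempotentElem, trace_sub, sub_add_cancel]
  have hr' : r.rank ≠ 0 := fun h => hr0 <| eq_zero_of_isStarProjection_of_trace_eq_zero hr <| by
    rw [trace_eq_rank_of_isIdempotentElem hr.isIdempotentElem, h, Nat.cast_zero]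
  have : (p - r).rank + r.rank = p.rank := by exact_mod_cast hrank
  omega

theorem sum_sum_mul_single_mul_apply [DecidableEq n] [CommSemiring R] (Y Z : Matrix n n R) :
    ∑ p, ∑ q, (Y * single p q (1 : R) * Z : Matrix n n R) p q = Y.trace * Z.trace := by
  simp [Matrix.mul_apply, single_apply, trace, Finset.sum_mul_sum, ite_and]

end Matrix

namespace NonUnitalStarAlgHom

variable {R A M : Type*} [CommSemiring R] [Semiring A] [StarRing A] [Module R A]
  [Ring M] [StarRing M] [Algebra R M]

structure ReducingProjection (π : A →⋆ₙₐ[R] M) where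
  val : M
  isStarProjection : IsStarProjection val
  commute : ∀ a, Commute (π a) val

variable {π π₁ π₂ : A →⋆ₙₐ[R] M}

variable (π) in
theorem isStarProjection_map_one : IsStarProjection (π 1) :=
  (IsStarProjection.one A).map π

def ReducingProjection.compl (q : π.ReducingProjection) : π.ReducingProjection :=
  ⟨1 - q.val, q.isStarProjection.one_sub, fun a => (Commute.one_right _).sub_right (q.commute a)⟩

variable (π) in
def compress (q : π.ReducingProjection) : A →⋆ₙₐ[R] M where
  toFun a := π a * q.val
  map_smul' r a := by simp
  map_zero' := by simp
  map_add' a b := by simp [add_mul]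
  map_mul' a b := by
    change π (a * b) * q.val = π a * q.val * (π b * q.val)
    rw [map_mul, mul_assoc (π a) q.val, ← mul_assoc q.val, ← (q.commute b).eq,
      mul_assoc (π b), q.isStarProjection.isIdempotentElem.eq, mul_assoc]
  map_star' a := by
    simp only [star_mul, q.isStarProjection.isSelfAdjoint.star_eq, ← map_star]
    exact (q.commute (star a)).eq

@[simp] theorem compress_apply (q : π.ReducingProjection) (a : A) :
    π.compress q a = π a * q.val :=
  rfl

theorem star_mul_eq_mul_star_of_intertwines {t : M} (ht : ∀ a, π₁ a * t = t * π₂ a) (a : A) :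
    star t * π₁ a = π₂ a * star t := by
  simpa [star_mul, map_star] using congrArg star (ht (star a))

/-- `v` is a partial isometry from the range of `π₂ 1` onto the range of `π₁ 1` intertwining the
two representations; for unital representations it is a unitary. -/
structure IsUnitaryEquivalence (π₁ π₂ : A →⋆ₙₐ[R] M) (v : M) : Prop where
  star_mul_self : star v * v = π₂ 1
  mul_star_self : v * star v = π₁ 1
  intertwines : ∀ a, π₁ a * v = v * π₂ a

variable {q : π.ReducingProjection}

theorem compress_add_compress_compl (a : A) : π.compress q a + π.compress q.compl a = π a := by
  simp [ReducingProjection.compl, mul_sub]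

theorem compress_mul_compress_compl (a b : A) : π.compress q a * π.compress q.compl b = 0 := by
  simp only [compress_apply, ReducingProjection.compl]
  rw [mul_assoc, ← mul_assoc q.val, ← (q.commute b).eq, mul_assoc,
    q.isStarProjection.mul_one_sub_self, mul_zero, mul_zero]

theorem val_mul_compress (a : A) : q.val * π.compress q a = π.compress q a := by
  rw [compress_apply, ← mul_assoc, ← (q.commute a).eq, mul_assoc,
    q.isStarProjection.isIdempotentElem.eq]

theorem compress_mul_val (a : A) : π.compress q a * q.val = π.compress q a := by
  rw [compress_apply, mul_assoc, q.isStarProjection.isIdempotentElem.eq]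

end NonUnitalStarAlgHom

namespace NonUnitalStarAlgHom.IsUnitaryEquivalence

open scoped ComplexOrder

variable {n A : Type*} [Fintype n] [DecidableEq n] [Semiring A] [StarRing A] [Module ℂ A]
  {π₁ π₂ : A →⋆ₙₐ[ℂ] Matrix n n ℂ} {v : Matrix n n ℂ}

theorem mul_star_mul_self (h : IsUnitaryEquivalence π₁ π₂ v) : v * star v * v = v :=
  mul_conjTranspose_mul_self_of_isIdempotentElem
    (h.star_mul_self ▸ (isStarProjection_map_one π₂).isIdempotentElem)

theorem map_one_mul (h : IsUnitaryEquivalence π₁ π₂ v) : π₁ 1 * v = v := by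
  rw [← h.mul_star_self, h.mul_star_mul_self]

theorem mul_map_one (h : IsUnitaryEquivalence π₁ π₂ v) : v * π₂ 1 = v := by
  rw [← h.star_mul_self, ← mul_assoc, h.mul_star_mul_self]

theorem trace_eq (h : IsUnitaryEquivalence π₁ π₂ v) (a : A) : (π₁ a).trace = (π₂ a).trace :=
  calc (π₁ a).trace = (π₁ a * π₁ 1).trace := by rw [← map_mul, mul_one]
    _ = (v * π₂ a * star v).trace := by rw [← h.mul_star_self, ← mul_assoc, h.intertwines]
    _ = (star v * v * π₂ a).trace := by rw [trace_mul_comm, ← mul_assoc]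
    _ = (π₂ a).trace := by rw [h.star_mul_self, ← map_mul, one_mul]

variable {q₁ : π₁.ReducingProjection} {q₂ : π₂.ReducingProjection}

theorem intertwines_of_compress (h : IsUnitaryEquivalence (π₁.compress q₁) (π₂.compress q₂) v)
    (a : A) : π₁ a * v = v * π₂ a := by
  have hq₁ : q₁.val * v = v := by
    conv_lhs => rw [← h.map_one_mul]
    rw [← mul_assoc, val_mul_compress, h.map_one_mul]
  have hq₂ : v * q₂.val = v := by
    conv_lhs => rw [← h.mul_map_one]
    rw [mul_assoc, compress_mul_val, h.mul_map_one]
  calc π₁ a * v = π₁.compress q₁ a * v := by rw [compress_apply, mul_assoc, hq₁]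
    _ = v * π₂.compress q₂ a := h.intertwines a
    _ = v * π₂ a := by rw [compress_apply, (q₂.commute a).eq, ← mul_assoc, hq₂]

theorem add {v₀ : Matrix n n ℂ}
    (h₀ : IsUnitaryEquivalence (π₁.compress q₁) (π₂.compress q₂) v₀)
    (h : IsUnitaryEquivalence (π₁.compress q₁.compl) (π₂.compress q₂.compl) v) :
    IsUnitaryEquivalence π₁ π₂ (v₀ + v) := by
  have h₁ : star v₀ * v = 0 := by
    rw [← h₀.map_one_mul, ← h.map_one_mul, star_mul,
      (isStarProjection_map_one (π₁.compress q₁)).isSelfAdjoint.star_eq, mul_assoc,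
      ← mul_assoc (π₁.compress q₁ 1), compress_mul_compress_compl, zero_mul, mul_zero]
  have h₂ : v₀ * star v = 0 := by
    rw [← h₀.mul_map_one, ← h.mul_map_one, star_mul,
      (isStarProjection_map_one (π₂.compress q₂.compl)).isSelfAdjoint.star_eq, mul_assoc,
      ← mul_assoc (π₂.compress q₂ 1), compress_mul_compress_compl, zero_mul, mul_zero]
  have h₁' : star v * v₀ = 0 := by simpa [star_mul] using congrArg star h₁
  have h₂' : v * star v₀ = 0 := by simpa [star_mul] using congrArg star h₂
  refine ⟨?_, ?_, fun a => ?_⟩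
  · rw [star_add, add_mul, mul_add, mul_add, h₁, h₁', h₀.star_mul_self, h.star_mul_self,
      add_zero, zero_add, compress_add_compress_compl]
  · rw [star_add, add_mul, mul_add, mul_add, h₂, h₂', h₀.mul_star_self, h.mul_star_self,
      add_zero, zero_add, compress_add_compress_compl]
  · rw [mul_add, add_mul, h₀.intertwines_of_compress, h.intertwines_of_compress]

end NonUnitalStarAlgHom.IsUnitaryEquivalence

namespace NonUnitalStarAlgHom

open scoped ComplexOrder MatrixOrder

variable {n A : Type*} [Fintype n] [Semiring A] [StarRing A] [Module ℂ A]
  (π₁ π₂ : A →⋆ₙₐ[ℂ] Matrix n n ℂ)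

abbrev pairRange : NonUnitalStarSubalgebra ℂ (Matrix n n ℂ × Matrix n n ℂ) :=
  NonUnitalStarAlgHom.range (π₁.prod π₂)

def pairTraceForm : LinearMap.BilinForm ℂ (pairRange π₁ π₂) :=
  (LinearMap.mul ℂ _).compr₂ (traceLinearMap n ℂ ℂ ∘ₗ LinearMap.fst ℂ _ _ ∘ₗ
    (pairRange π₁ π₂).toNonUnitalSubalgebra.toSubmodule.subtype)

variable {π₁ π₂}

theorem pairTraceForm_apply (x y : pairRange π₁ π₂) :
    pairTraceForm π₁ π₂ x y = (x.1.1 * y.1.1).trace :=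
  rfl

theorem pairTraceForm_isSymm : (pairTraceForm π₁ π₂).IsSymm :=
  ⟨fun _ _ => trace_mul_comm _ _⟩

theorem exists_eq_of_mem_pairRange (x : pairRange π₁ π₂) : ∃ a, x.1 = (π₁ a, π₂ a) := by
  obtain ⟨a, ha⟩ := x.2
  exact ⟨a, ha.symm⟩

theorem pairTraceForm_nondegenerate (h : ∀ a, (π₁ a).trace = (π₂ a).trace) :
    (pairTraceForm π₁ π₂).Nondegenerate := by
  suffices hleft : (pairTraceForm π₁ π₂).SeparatingLeft from
    ⟨hleft, fun y hy => hleft y fun x => (pairTraceForm_isSymm.eq y x).trans (hy x)⟩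
  intro x hx
  obtain ⟨a, ha⟩ := exists_eq_of_mem_pairRange x
  have h₁ : (π₁ a * (π₁ a)ᴴ).trace = 0 := by
    simpa [pairTraceForm_apply, ha, star_eq_conjTranspose] using hx (star x)
  have h₂ : (π₂ a * (π₂ a)ᴴ).trace = 0 := by
    rwa [← star_eq_conjTranspose, ← map_star, ← map_mul, ← h, map_mul, map_star]
  rw [trace_mul_conjTranspose_self_eq_zero_iff] at h₁ h₂
  ext : 1
  simp [ha, h₁, h₂]

instance : FiniteDimensional ℂ (pairRange π₁ π₂) :=
  inferInstanceAs (FiniteDimensional ℂ (pairRange π₁ π₂).toNonUnitalSubalgebra.toSubmodule)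

theorem map_one_mul_fst (x : pairRange π₁ π₂) : π₁ 1 * x.1.1 = x.1.1 := by
  obtain ⟨a, ha⟩ := exists_eq_of_mem_pairRange x
  simp [ha, ← map_mul]

theorem fst_mul_map_one (x : pairRange π₁ π₂) : x.1.1 * π₁ 1 = x.1.1 := by
  obtain ⟨a, ha⟩ := exists_eq_of_mem_pairRange x
  simp [ha, ← map_mul]

theorem trace_fst_eq_trace_snd (h : ∀ a, (π₁ a).trace = (π₂ a).trace)
    (x : pairRange π₁ π₂) : x.1.1.trace = x.1.2.trace := by
  obtain ⟨a, ha⟩ := exists_eq_of_mem_pairRange x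
  simp [ha, h]

noncomputable def pairCasimir (h : ∀ a, (π₁ a).trace = (π₂ a).trace) (X : Matrix n n ℂ) :
    Matrix n n ℂ :=
  let b := Module.finBasis ℂ (pairRange π₁ π₂)
  let d := (pairTraceForm π₁ π₂).dualBasis (pairTraceForm_nondegenerate h) b
  ∑ i, (b i).1.1 * X * (d i).1.2

theorem map_mul_pairCasimir (h : ∀ a, (π₁ a).trace = (π₂ a).trace) (a : A)
    (X : Matrix n n ℂ) : π₁ a * pairCasimir h X = pairCasimir h X * π₂ a := by
  let Φ : pairRange π₁ π₂ →ₗ[ℂ] pairRange π₁ π₂ →ₗ[ℂ] Matrix n n ℂ :=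
    LinearMap.mk₂ ℂ (fun x y => x.1.1 * X * y.1.2) (by simp [add_mul]) (by simp)
      (by simp [mul_add]) (by simp)
  have hassoc (x y z : pairRange π₁ π₂) :
      pairTraceForm π₁ π₂ (x * y) z = pairTraceForm π₁ π₂ x (y * z) := by
    simp [pairTraceForm_apply, mul_assoc]
  simpa [Φ, pairCasimir, Finset.mul_sum, Finset.sum_mul, mul_assoc] using
    (pairTraceForm π₁ π₂).sum_mul_basis_dualBasis (pairTraceForm_nondegenerate h)
      pairTraceForm_isSymm hassoc _ Φ ⟨(π₁ a, π₂ a), a, rfl⟩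

theorem map_one_mul_pairCasimir (h : ∀ a, (π₁ a).trace = (π₂ a).trace) (X : Matrix n n ℂ) :
    π₁ 1 * pairCasimir h X = pairCasimir h X := by
  simp only [pairCasimir, Finset.mul_sum, ← mul_assoc, map_one_mul_fst]

variable [DecidableEq n]

theorem sum_pairCasimir_single_apply (h : ∀ a, (π₁ a).trace = (π₂ a).trace) :
    ∑ p, ∑ q, pairCasimir h (single p q 1) p q = (π₁ 1).trace := by
  set β := pairTraceForm π₁ π₂
  set b := Module.finBasis ℂ (pairRange π₁ π₂)
  set d := β.dualBasis (pairTraceForm_nondegenerate h) b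
  let u : pairRange π₁ π₂ := ⟨(π₁ 1, π₂ 1), 1, rfl⟩
  calc ∑ p, ∑ q, pairCasimir h (single p q 1) p q
      = ∑ i, ∑ p, ∑ q, ((b i).1.1 * single p q (1 : ℂ) * (d i).1.2 : Matrix n n ℂ) p q := by
        simp only [pairCasimir, Matrix.sum_apply]
        exact (Finset.sum_congr rfl fun _ _ => Finset.sum_comm).trans Finset.sum_comm
    _ = ∑ i, β u (d i) * β (b i) u := Finset.sum_congr rfl fun i _ => by
        rw [sum_sum_mul_single_mul_apply, mul_comm, pairTraceForm_apply, pairTraceForm_apply,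
          fst_mul_map_one, map_one_mul_fst, trace_fst_eq_trace_snd h (d i)]
    _ = β u u := β.sum_apply_dualBasis_mul_apply_basis _ pairTraceForm_isSymm b u u
    _ = (π₁ 1).trace := by simp [β, u, pairTraceForm_apply, ← map_mul]

theorem exists_intertwiner (h : ∀ a, (π₁ a).trace = (π₂ a).trace)
    (h1 : π₁ 1 ≠ 0) : ∃ t, t ≠ 0 ∧ π₁ 1 * t = t ∧ ∀ a, π₁ a * t = t * π₂ a := by
  obtain ⟨X, hX⟩ : ∃ X, pairCasimir h X ≠ 0 := by
    by_contra! h0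
    refine h1 (eq_zero_of_isStarProjection_of_trace_eq_zero (isStarProjection_map_one π₁) ?_)
    simp [← sum_pairCasimir_single_apply h, h0]
  exact ⟨_, hX, map_one_mul_pairCasimir h X, fun a => map_mul_pairCasimir h a X⟩

theorem exists_isUnitaryEquivalence_compress {t : Matrix n n ℂ} (ht0 : t ≠ 0)
    (ht1 : π₁ 1 * t = t) (ht : ∀ a, π₁ a * t = t * π₂ a) :
    ∃ (q₁ : π₁.ReducingProjection) (q₂ : π₂.ReducingProjection) (v : Matrix n n ℂ),
      π₂.compress q₂ 1 ≠ 0 ∧ IsUnitaryEquivalence (π₁.compress q₁) (π₂.compress q₂) v := by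
  have hts := star_mul_eq_mul_star_of_intertwines ht
  have hs0 : star t * t ≠ 0 := by
    rwa [star_eq_conjTranspose, Ne, conjTranspose_mul_self_eq_zero]
  have hsπ (a : A) : Commute (star t * t) (π₂ a) := by
    rw [commute_iff_eq, mul_assoc, ← ht, ← mul_assoc, hts, mul_assoc]
  obtain ⟨c, hc, q, hq, hq0, hsq, hqπ⟩ :=
    exists_isStarProjection_mul_eq_smul (star_mul_self_nonneg t) hs0 finite_real_spectrum
  -- `t` is `√c` times an isometry on the range of the `c`-eigenprojection `q` of `t* t`
  set v := (√c)⁻¹ • (t * q)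
  have hvv : star v * v = q :=
    calc star v * v = ((√c)⁻¹ * (√c)⁻¹) • (q * (star t * t * q)) := by
          simp only [v, star_smul, star_trivial, star_mul, hq.isSelfAdjoint.star_eq,
            smul_mul_smul_comm, mul_assoc]
      _ = q := by
          rw [hsq, mul_smul_comm, hq.isIdempotentElem.eq, smul_smul, ← mul_inv,
            Real.mul_self_sqrt hc.le, inv_mul_cancel₀ hc.ne', one_smul]
  have hv (a : A) : π₁ a * v = v * π₂ a := by
    rw [mul_smul_comm, smul_mul_assoc, ← mul_assoc, ht, mul_assoc, mul_assoc,
      (hqπ _ (hsπ a)).eq]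
  have hvs := star_mul_eq_mul_star_of_intertwines hv
  have hv1 : π₁ 1 * v = v := by rw [mul_smul_comm, ← mul_assoc, ht1]
  have hvq : v * q = v := by rw [smul_mul_assoc, mul_assoc, hq.isIdempotentElem.eq]
  have hq1 : π₂ 1 * q = q := by rw [← hvv, ← mul_assoc, ← hvs, mul_assoc, hv1]
  refine ⟨⟨v * star v, ⟨?_, IsSelfAdjoint.mul_star_self v⟩, fun a => ?_⟩,
    ⟨q, hq, fun a => (hqπ _ (hsπ a)).symm⟩, v, ?_, ⟨?_, ?_, fun a => ?_⟩⟩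
  · rw [IsIdempotentElem, mul_assoc, ← mul_assoc (star v), hvv, ← mul_assoc, hvq]
  · rw [commute_iff_eq, ← mul_assoc, hv, mul_assoc, ← hvs, mul_assoc]
  · rwa [compress_apply, hq1]
  · rw [compress_apply, hq1, hvv]
  · rw [compress_apply, ← mul_assoc, hv1]
  · rw [compress_apply, compress_apply, mul_assoc, mul_assoc, hvv, hvq, hv,
      ← (hqπ _ (hsπ a)).eq, ← mul_assoc, hvq]

theorem exists_isUnitaryEquivalence (π₁ π₂ : A →⋆ₙₐ[ℂ] Matrix n n ℂ)
    (h : ∀ a, (π₁ a).trace = (π₂ a).trace) : ∃ v, IsUnitaryEquivalence π₁ π₂ v := by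
  obtain ⟨k, hk⟩ : ∃ k, (π₂ 1).rank = k := ⟨_, rfl⟩
  induction k using Nat.strong_induction_on generalizing π₁ π₂ with
  | _ k ih =>
    by_cases h1 : π₁ 1 = 0
    · have h2 : π₂ 1 = 0 := eq_zero_of_isStarProjection_of_trace_eq_zero
        (isStarProjection_map_one π₂) (by rw [← h, h1, trace_zero])
      exact ⟨0, by simp [h2], by simp [h1], by simp⟩
    obtain ⟨t, ht0, ht1, ht⟩ := exists_intertwiner h h1
    obtain ⟨q₁, q₂, v₀, hq₂, hv₀⟩ := exists_isUnitaryEquivalence_compress ht0 ht1 ht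
    have htr (a : A) : (π₁.compress q₁.compl a).trace = (π₂.compress q₂.compl a).trace := by
      rw [← add_right_inj (π₁.compress q₁ a).trace, ← trace_add, compress_add_compress_compl,
        hv₀.trace_eq, ← trace_add, compress_add_compress_compl, h]
    have hrank : (π₂.compress q₂.compl 1).rank < k := by
      rw [eq_sub_of_add_eq' (compress_add_compress_compl (q := q₂) 1), ← hk]
      refine rank_sub_lt_of_isStarProjection (isStarProjection_map_one _)
        (isStarProjection_map_one _) ?_ hq₂
      rw [compress_apply, ← mul_assoc, ← map_mul, mul_one]
    obtain ⟨v, hv⟩ := ih _ hrank _ _ htr rfl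
    exact ⟨v₀ + v, hv₀.add hv⟩

end NonUnitalStarAlgHom

theorem StarAlgHom.exists_mem_unitary_conj_of_trace_eq {n A : Type*} [Fintype n]
    [DecidableEq n] [Ring A] [StarRing A] [Algebra ℂ A] (π₁ π₂ : A →⋆ₐ[ℂ] Matrix n n ℂ)
    (h : ∀ a, (π₁ a).trace = (π₂ a).trace) :
    ∃ u ∈ unitary (Matrix n n ℂ), ∀ a, π₁ a = u * π₂ a * star u := by
  obtain ⟨v, hv⟩ := NonUnitalStarAlgHom.exists_isUnitaryEquivalence
    π₁.toNonUnitalStarAlgHom π₂.toNonUnitalStarAlgHom h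
  refine ⟨v, ⟨?_, ?_⟩, fun a => ?_⟩
  · simpa using hv.star_mul_self
  · simpa using hv.mul_star_self
  · have := hv.intertwines a
    simp only [coe_toNonUnitalStarAlgHom] at this
    rw [← this, mul_assoc, hv.mul_star_self]
    simp

theorem Subalgebra.mem_of_mul_eq_one {K R : Type*} [Field K] [Ring R] [Algebra K R]
    [FiniteDimensional K R] (S : Subalgebra K R) {x y : R} (hx : x ∈ S) (hxy : x * y = 1) :
    y ∈ S := by
  have : FiniteDimensional K S :=
    inferInstanceAs (FiniteDimensional K (Subalgebra.toSubmodule S))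
  have : IsArtinianRing S := isArtinian_of_tower K inferInstance
  have hreg : IsRightRegular (⟨x, hx⟩ : S) := fun a b hab => Subtype.ext <| by
    have := congrArg (fun z : S => z.1 * y) hab
    simpa [mul_assoc, hxy] using this
  obtain ⟨z, hz⟩ := (IsArtinianRing.isUnit_iff_isRightRegular.mpr hreg).exists_left_inv
  have hzx : z.1 * x = 1 := congrArg Subtype.val hz
  have : y = z.1 := by rw [← one_mul y, ← hzx, mul_assoc, hxy, mul_one]
  exact this ▸ z.2

theorem StarAlgebra.adjoin_toSubalgebra_of_star_subset {R A : Type*} [CommSemiring R]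
    [StarRing R] [Semiring A] [StarRing A] [Algebra R A] [StarModule R A] {s : Set A}
    (hs : star s ⊆ Algebra.adjoin R s) :
    (StarAlgebra.adjoin R s).toSubalgebra = Algebra.adjoin R s := by
  rw [StarAlgebra.adjoin_toSubalgebra]
  exact le_antisymm (Algebra.adjoin_le (Set.union_subset Algebra.subset_adjoin hs))
    (Algebra.adjoin_mono Set.subset_union_left)

theorem trace_fst_eq_trace_snd_of_mem_adjoin {n R G : Type*} [Fintype n] [DecidableEq n]
    [CommSemiring R] [Monoid G] (φ : G →* Matrix n n R × Matrix n n R)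
    (hφ : ∀ g, (φ g).1.trace = (φ g).2.trace) {x : Matrix n n R × Matrix n n R}
    (hx : x ∈ Algebra.adjoin R (Set.range φ)) :
    x.1.trace = x.2.trace := by
  rw [← Subalgebra.mem_toSubmodule, Algebra.adjoin_eq_span, MonoidHom.mclosure_range] at hx
  induction hx using Submodule.span_induction with
  | mem x hx =>
    obtain ⟨g, rfl⟩ := hx
    exact hφ g
  | zero => simp
  | add x y _ _ hx hy => simp [hx, hy]
  | smul c x _ hx => simp [hx]

/-- Two unitary representations of a monoid with equal characters are unitarily equivalent:
if `Tr ρ₁(g) = Tr ρ₂(g)` for all `g`, then there is a unitary `p` with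
`ρ₁(g) = p ρ₂(g) p⁻¹` for all `g`. -/
theorem unitary_conjugate_of_trace_eq {G : Type*} [Monoid G] (r : ℕ)
    (ρ₁ ρ₂ : G →* Matrix.unitaryGroup (Fin r) ℂ)
    (h : ∀ g : G, Matrix.trace ((ρ₁ g : Matrix (Fin r) (Fin r) ℂ)) =
      Matrix.trace ((ρ₂ g : Matrix (Fin r) (Fin r) ℂ))) :
    ∃ p : Matrix.unitaryGroup (Fin r) ℂ, ∀ g : G, ρ₁ g = p * ρ₂ g * p⁻¹ := by
  let φ := ((unitary _).subtype.comp ρ₁).prod ((unitary _).subtype.comp ρ₂)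
  have hstar : star (Set.range φ) ⊆ Algebra.adjoin ℂ (Set.range φ) := by
    rintro x ⟨g, hg⟩
    rw [← star_star x, ← hg]
    refine Subalgebra.mem_of_mul_eq_one _ (Algebra.subset_adjoin (Set.mem_range_self g)) ?_
    exact Prod.ext (Unitary.mul_star_self_of_mem (ρ₁ g).2)
      (Unitary.mul_star_self_of_mem (ρ₂ g).2)
  let S := StarAlgebra.adjoin ℂ (Set.range φ)
  have hS : ∀ x : S, x.1 ∈ Algebra.adjoin ℂ (Set.range φ) := fun x => by
    rw [← StarAlgebra.adjoin_toSubalgebra_of_star_subset hstar]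
    exact x.2
  obtain ⟨u, hu, hπ⟩ := StarAlgHom.exists_mem_unitary_conj_of_trace_eq
    ((StarAlgHom.fst ℂ _ _).comp S.subtype) ((StarAlgHom.snd ℂ _ _).comp S.subtype)
    fun x => trace_fst_eq_trace_snd_of_mem_adjoin φ h (hS x)
  refine ⟨⟨u, hu⟩, fun g => Subtype.ext ?_⟩
  simpa [φ] using hπ ⟨φ g, StarAlgebra.subset_adjoin ℂ _ (Set.mem_range_self g)⟩
end

section
/- Let G be a monoid and let ρ : G → U(2) be a monoid homomorphism into the group of 2×2 complex unitary matrices such that for every g ∈ G the matrix ρ(g) has 1 as an eigenvalue, i.e. there exists a nonzero vector v_g ∈ ℂ² with ρ(g) v_g = v_g. Then there exists a single nonzero vector v ∈ ℂ² such that ρ(g) v = v for all g ∈ G. -/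
/-!
For a unitary `A` fixing `u`, every displacement `A x - x` is orthogonal to `u`, because `Aᴴ`
fixes `u` too. Choose `g₀` with `A = ρ g₀ ≠ 1` and a fixed vector `u`. Given `g`, let `B = ρ g`
fix `w ≠ 0` and `A * B` fix `x ≠ 0`. Then `y = B x - x = Aᴴ x - x` is orthogonal to both `w`
and `u`. If `y ≠ 0`, both lie on the line `yᗮ`, so `B u = u`. If `y = 0`, then `x` is fixed by
`A` and by `B`, and the fixed space of `A ≠ 1` is a line containing `u` and `x`, so again
`B u = u`.
-/

open Matrix Module Module.End

section

variable {K V : Type*} [Field K] [AddCommGroup V] [Module K V]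

theorem Submodule.le_span_singleton_of_ne_top (hV : finrank K V = 2) {S : Submodule K V}
    (hS : S ≠ ⊤) {v : V} (hv : v ∈ S) (hv0 : v ≠ 0) : S ≤ K ∙ v := by
  have : FiniteDimensional K V := Module.finite_of_finrank_pos (by omega)
  have hlt := Submodule.finrank_lt hS
  refine (Submodule.eq_of_le_of_finrank_le
    ((Submodule.span_singleton_le_iff_mem v S).2 hv) ?_).ge
  rw [finrank_span_singleton hv0]
  omega

namespace Matrix

variable {n : Type*} [Fintype n] [DecidableEq n]

theorem mem_eigenspace_toLin'_one_iff {A : Matrix n n K} {v : n → K} :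
    v ∈ eigenspace (toLin' A) 1 ↔ A *ᵥ v = v := by
  simp

theorem eigenspace_toLin'_one_ne_top {A : Matrix n n K} (hA : A ≠ 1) :
    eigenspace (toLin' A) 1 ≠ ⊤ := by
  intro htop
  refine hA (toLin'.injective (LinearMap.ext fun v => ?_))
  simpa [mem_eigenspace_toLin'_one_iff] using htop.ge (Submodule.mem_top (x := v))

theorem ker_dotProductEquiv_ne_top {y : n → K} (hy : y ≠ 0) :
    LinearMap.ker (dotProductEquiv K n y) ≠ ⊤ := by
  rwa [Ne, LinearMap.ker_eq_top, map_eq_zero_iff _ (dotProductEquiv K n).injective]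

theorem mulVec_eq_self_of_mem_of_ne_top (hn : Fintype.card n = 2) {B : Matrix n n K}
    {S : Submodule K (n → K)} (hS : S ≠ ⊤) {v : n → K} (hv0 : v ≠ 0) (hvS : v ∈ S)
    (hBv : B *ᵥ v = v) {u : n → K} (huS : u ∈ S) : B *ᵥ u = u := by
  have hdim : finrank K (n → K) = 2 := by rw [finrank_fintype_fun_eq_card, hn]
  have hv : K ∙ v ≤ eigenspace (toLin' B) 1 :=
    (Submodule.span_singleton_le_iff_mem _ _).2 (mem_eigenspace_toLin'_one_iff.2 hBv)
  exact mem_eigenspace_toLin'_one_iff.1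
    (hv (Submodule.le_span_singleton_of_ne_top hdim hS hvS hv0 huS))

variable [StarRing K]

theorem star_mulVec_eq_self_of_mem_unitaryGroup {A : Matrix n n K}
    (hA : A ∈ unitaryGroup n K) {u : n → K} (hu : A *ᵥ u = u) : star A *ᵥ u = u := by
  conv_lhs => rw [← hu]
  rw [mulVec_mulVec, Unitary.star_mul_self_of_mem hA, one_mulVec]

theorem star_sub_dotProduct_eq_zero {A : Matrix n n K} (hA : A ∈ unitaryGroup n K)
    {u : n → K} (hu : A *ᵥ u = u) (x : n → K) : star (A *ᵥ x - x) ⬝ᵥ u = 0 := by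
  rw [star_sub, sub_dotProduct, star_mulVec, ← dotProduct_mulVec, ← star_eq_conjTranspose,
    star_mulVec_eq_self_of_mem_unitaryGroup hA hu, sub_self]

theorem mulVec_eq_self_of_mul_mulVec_eq_self (hn : Fintype.card n = 2) {A B : Matrix n n K}
    (hA : A ∈ unitaryGroup n K) (hB : B ∈ unitaryGroup n K) (hA1 : A ≠ 1)
    {u w x : n → K} (hu : A *ᵥ u = u) (hw0 : w ≠ 0) (hw : B *ᵥ w = w) (hx0 : x ≠ 0)
    (hx : (A * B) *ᵥ x = x) : B *ᵥ u = u := by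
  have hBx : B *ᵥ x = star A *ᵥ x := by
    conv_rhs => rw [← hx]
    rw [mulVec_mulVec, ← mul_assoc, Unitary.star_mul_self_of_mem hA, one_mul]
  by_cases hy : B *ᵥ x - x = 0
  · have hBx' : B *ᵥ x = x := sub_eq_zero.mp hy
    have hAx : A *ᵥ x = x := by
      simpa using star_mulVec_eq_self_of_mem_unitaryGroup (Unitary.star_mem hA) (hBx ▸ hBx')
    exact mulVec_eq_self_of_mem_of_ne_top hn (eigenspace_toLin'_one_ne_top hA1) hx0
      (mem_eigenspace_toLin'_one_iff.2 hAx) hBx' (mem_eigenspace_toLin'_one_iff.2 hu)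
  · have hyw : star (B *ᵥ x - x) ⬝ᵥ w = 0 := star_sub_dotProduct_eq_zero hB hw x
    have hyu : star (B *ᵥ x - x) ⬝ᵥ u = 0 := hBx ▸ star_sub_dotProduct_eq_zero
      (Unitary.star_mem hA) (star_mulVec_eq_self_of_mem_unitaryGroup hA hu) x
    exact mulVec_eq_self_of_mem_of_ne_top hn (ker_dotProductEquiv_ne_top (star_ne_zero.2 hy))
      hw0 hyw hw hyu

end Matrix

end

/-- If every matrix in the image of a monoid homomorphism `ρ : G → U(2)` fixes some nonzero
vector of `ℂ²`, then there is a single nonzero vector fixed by all of them. -/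
theorem common_fixed_vector_of_unitary_rank_two {G : Type*} [Monoid G]
    (ρ : G →* Matrix.unitaryGroup (Fin 2) ℂ)
    (h : ∀ g : G, ∃ v : Fin 2 → ℂ, v ≠ 0 ∧
      (ρ g : Matrix (Fin 2) (Fin 2) ℂ).mulVec v = v) :
    ∃ v : Fin 2 → ℂ, v ≠ 0 ∧ ∀ g : G, (ρ g : Matrix (Fin 2) (Fin 2) ℂ).mulVec v = v := by
  by_cases hρ : ∀ g, ρ g = 1
  · exact ⟨1, one_ne_zero, fun g => by simp [hρ g]⟩
  push Not at hρ
  obtain ⟨g₀, hg₀⟩ := hρ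
  obtain ⟨u, hu0, hu⟩ := h g₀
  refine ⟨u, hu0, fun g => ?_⟩
  obtain ⟨w, hw0, hw⟩ := h g
  obtain ⟨x, hx0, hx⟩ := h (g₀ * g)
  rw [map_mul, Submonoid.coe_mul] at hx
  exact mulVec_eq_self_of_mul_mulVec_eq_self (Fintype.card_fin 2) (ρ g₀).2 (ρ g).2
    (fun h1 => hg₀ (Subtype.ext h1)) hu hw0 hw hx0 hx
end

section
/- Let r ∈ ℕ, L ≥ 0, and let A, B : ℝ → M_r(ℂ) be continuous. Suppose U, V : ℝ → M_r(ℂ) satisfy U(0) = V(0) = 1, U'(t) = A(t)·U(t) and V'(t) = B(t)·V(t) for all t ∈ [0, L], and U(t) and V(t) are unitary matrices for every t ∈ [0, L]. Then ‖U(L)⁻¹·V(L) − 1‖ ≤ ∫₀^L ‖A(t) − B(t)‖ dt, where ‖·‖ is the operator norm on M_r(ℂ) induced by the Euclidean norm on ℂ^r. -/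
/-!
The quotient `W = U⁻¹ V` starts at `1` and satisfies `W' = U⁻¹ (B - A) V`, whose norm is
`‖A - B‖` because multiplying by unitaries is isometric in a C⋆-ring. The fundamental theorem of
calculus then bounds `‖W(L) - 1‖` by the integral of `‖A - B‖`.
-/

open Set
open scoped Ring

theorem Ring.inverse_eq_star_of_mem_unitary {M : Type*} [MonoidWithZero M] [StarMul M] {u : M}
    (hu : u ∈ unitary M) : u⁻¹ʳ = star u :=
  Ring.inverse_unit (Unitary.toUnits ⟨u, hu⟩)

section InverseDerivative

variable {𝕜 R : Type*} [NontriviallyNormedField 𝕜] [NormedRing R] [NormedAlgebra 𝕜 R]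
  [HasSummableGeomSeries R]

theorem HasDerivAt.ringInverse {f : 𝕜 → R} {f' : R} {t : 𝕜} (hf : HasDerivAt f f' t)
    (ht : IsUnit (f t)) : HasDerivAt (fun s => (f s)⁻¹ʳ) (-(f t)⁻¹ʳ * f' * (f t)⁻¹ʳ) t := by
  obtain ⟨u, hu⟩ := ht
  have hinv := hasFDerivAt_ringInverse (𝕜 := 𝕜) u
  rw [hu] at hinv
  exact (hinv.comp_hasDerivAt t hf).congr_deriv (by simp [← hu])

theorem hasDerivAt_ringInverse_mul_of_hasDerivAt_mul {U V : 𝕜 → R} {a b : R} {t : 𝕜}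
    (hU : HasDerivAt U (a * U t) t) (hV : HasDerivAt V (b * V t) t) (hUt : IsUnit (U t)) :
    HasDerivAt (fun s => (U s)⁻¹ʳ * V s) ((U t)⁻¹ʳ * (b - a) * V t) t := by
  refine ((hU.ringInverse hUt).mul hV).congr_deriv ?_
  rw [← mul_assoc (-(U t)⁻¹ʳ) a (U t), Ring.mul_inverse_cancel_right _ _ hUt]
  noncomm_ring

end InverseDerivative

section CStarRing

variable {E : Type*} [NormedRing E] [StarRing E] [CStarRing E]

theorem norm_ringInverse_mul_mul_of_mem_unitary {u v : E} (hu : u ∈ unitary E)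
    (hv : v ∈ unitary E) (x : E) : ‖u⁻¹ʳ * x * v‖ = ‖x‖ := by
  rw [Ring.inverse_eq_star_of_mem_unitary hu, mul_assoc,
    CStarRing.norm_mem_unitary_mul _ (Unitary.star_mem hu), CStarRing.norm_mul_mem_unitary _ hv]

theorem norm_ringInverse_mul_sub_one_le_integral [NormedAlgebra ℝ E] [CompleteSpace E]
    {A B U V : ℝ → E} {L : ℝ} (hL : 0 ≤ L) (hA : ContinuousOn A (Icc 0 L))
    (hB : ContinuousOn B (Icc 0 L)) (hU0 : U 0 = 1) (hV0 : V 0 = 1)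
    (hU : ∀ t ∈ Icc 0 L, HasDerivAt U (A t * U t) t)
    (hV : ∀ t ∈ Icc 0 L, HasDerivAt V (B t * V t) t)
    (hUu : ∀ t ∈ Icc 0 L, U t ∈ unitary E) (hVu : ∀ t ∈ Icc 0 L, V t ∈ unitary E) :
    ‖(U L)⁻¹ʳ * V L - 1‖ ≤ ∫ t in 0..L, ‖A t - B t‖ := by
  have hUunit : ∀ t ∈ Icc 0 L, IsUnit (U t) := fun t ht => (Unitary.toUnits ⟨_, hUu t ht⟩).isUnit
  have hW : ∀ t ∈ uIcc 0 L,
      HasDerivAt (fun s => (U s)⁻¹ʳ * V s) ((U t)⁻¹ʳ * (B t - A t) * V t) t := by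
    rw [uIcc_of_le hL]
    exact fun t ht => hasDerivAt_ringInverse_mul_of_hasDerivAt_mul (hU t ht) (hV t ht) (hUunit t ht)
  have hUinv : ContinuousOn (fun t => (U t)⁻¹ʳ) (Icc 0 L) := fun t ht =>
    ((hU t ht).ringInverse (hUunit t ht)).continuousAt.continuousWithinAt
  have hVc : ContinuousOn V (Icc 0 L) := fun t ht => (hV t ht).continuousAt.continuousWithinAt
  have hW' : ContinuousOn (fun t => (U t)⁻¹ʳ * (B t - A t) * V t) (Icc 0 L) :=
    (hUinv.mul (hB.sub hA)).mul hVc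
  calc ‖(U L)⁻¹ʳ * V L - 1‖ = ‖∫ t in 0..L, (U t)⁻¹ʳ * (B t - A t) * V t‖ := by
        rw [intervalIntegral.integral_eq_sub_of_hasDerivAt hW (hW'.intervalIntegrable_of_Icc hL),
          hU0, hV0, Ring.inverse_one, one_mul]
    _ ≤ ∫ t in 0..L, ‖A t - B t‖ := by
        refine intervalIntegral.norm_integral_le_of_norm_le hL (.of_forall fun t ht => ?_)
          ((hA.sub hB).norm.intervalIntegrable_of_Icc hL)
        rw [norm_ringInverse_mul_mul_of_mem_unitary (hUu t (Ioc_subset_Icc_self ht))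
          (hVu t (Ioc_subset_Icc_self ht)), norm_sub_rev]

end CStarRing

open scoped Matrix.Norms.L2Operator in
/-- Gronwall-type estimate for two unitary cocycles: if `U' = A·U` and `V' = B·V` on `[0, L]`
with `U(0) = V(0) = 1` and `U(t)`, `V(t)` unitary, then, in the `ℓ² → ℓ²` operator norm,
`‖U(L)⁻¹ V(L) − 1‖ ≤ ∫₀^L ‖A(t) − B(t)‖ dt`. -/
theorem dist_unitary_cocycles_le (r : ℕ) (L : ℝ) (hL : 0 ≤ L)
    (A B : ℝ → Matrix (Fin r) (Fin r) ℂ) (hA : Continuous A) (hB : Continuous B)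
    (U V : ℝ → Matrix (Fin r) (Fin r) ℂ)
    (hU0 : U 0 = 1) (hV0 : V 0 = 1)
    (hU : ∀ t ∈ Set.Icc (0 : ℝ) L, HasDerivAt U (A t * U t) t)
    (hV : ∀ t ∈ Set.Icc (0 : ℝ) L, HasDerivAt V (B t * V t) t)
    (hUu : ∀ t ∈ Set.Icc (0 : ℝ) L, U t ∈ Matrix.unitaryGroup (Fin r) ℂ)
    (hVu : ∀ t ∈ Set.Icc (0 : ℝ) L, V t ∈ Matrix.unitaryGroup (Fin r) ℂ) :
    ‖(U L)⁻¹ * V L - 1‖ ≤ ∫ t in (0 : ℝ)..L, ‖A t - B t‖ := by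
  rw [Matrix.nonsing_inv_eq_ringInverse]
  exact norm_ringInverse_mul_sub_one_le_integral hL hA.continuousOn hB.continuousOn hU0 hV0 hU hV
    hUu hVu
end
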